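/- Let |φ₁⟩,…,|φ₂₄⟩ ∈ ℂ³⊗ℂ⁹ be as in the 3×9 grid construction (|φ_{1,2}⟩=|1,0⟩±|2,1⟩, |φ_{3,4}⟩=|1,1⟩±|2,0⟩, |φ_{5,6}⟩=|1,2⟩±|2,3⟩, |φ_{7,8}⟩=|1,3⟩±|2,2⟩, |φ_{9,10}⟩=|2,5⟩±|2,7⟩, |φ_{11,12}⟩=|2,4⟩±|2,6⟩, |φ_{13,14}⟩=|0,5⟩±|1,6⟩, |φ_{15,16}⟩=|0,6⟩±|1,5⟩, |φ_{17,18}⟩=|0,7⟩±|1,8⟩, |φ_{19,20}⟩=|0,8⟩±|1,7⟩, |φ_{21,22}⟩=|0,1⟩±|0,3⟩, |φ_{23,24}⟩=|0,2⟩±|0,4⟩). If E is any 9×9 complex Hermitian matrix satisfying ⟨φ_k|(I₃⊗E)|φ_l⟩ = 0 for all k ≠ l, then E is a scalar multiple of the 9×9 identity. -/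
import Mathlib


open Finset

/-- standard basis vector `e_i ⊗ e_j` of `ℂ³ ⊗ ℂ⁹`. -/
def ket39 (i : Fin 3) (j : Fin 9) : Fin 3 × Fin 9 → ℂ := fun p => if p = (i, j) then 1 else 0

/-- the twelve pairs `(u, v)` of basis vectors of the `3 × 9` grid construction. -/
def gridPair : Fin 12 → (Fin 3 × Fin 9) × (Fin 3 × Fin 9)
  | 0 => ((1,0),(2,1))
  | 1 => ((1,1),(2,0))
  | 2 => ((1,2),(2,3))
  | 3 => ((1,3),(2,2))
  | 4 => ((2,5),(2,7))
  | 5 => ((2,4),(2,6))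
  | 6 => ((0,5),(1,6))
  | 7 => ((0,6),(1,5))
  | 8 => ((0,7),(1,8))
  | 9 => ((0,8),(1,7))
  | 10 => ((0,1),(0,3))
  | 11 => ((0,2),(0,4))

/-- the 24 states `|φ_k⟩`: for the pair `m` the two states `|u⟩ ± |v⟩`. -/
def gridState (m : Fin 12) (ε : Fin 2) : Fin 3 × Fin 9 → ℂ :=
  ket39 (gridPair m).1.1 (gridPair m).1.2
    + (if ε = 0 then (1 : ℂ) else -1) • ket39 (gridPair m).2.1 (gridPair m).2.2

/-- `(I₃ ⊗ E) v` for `E` acting on the second tensor factor. -/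
noncomputable def actBC (E : Matrix (Fin 9) (Fin 9) ℂ) (v : Fin 3 × Fin 9 → ℂ) :
    Fin 3 × Fin 9 → ℂ := fun p => ∑ j : Fin 9, E p.2 j * v (p.1, j)


def bf (E : Matrix (Fin 9) (Fin 9) ℂ) (x y : Fin 3 × Fin 9) : ℂ :=
  if x.1 = y.1 then E x.2 y.2 else 0

lemma actBC_ket (E : Matrix (Fin 9) (Fin 9) ℂ) (b : Fin 3) (j : Fin 9) (p : Fin 3 × Fin 9) :
    actBC E (ket39 b j) p = if p.1 = b then E p.2 j else 0 := by
  simp only [actBC, ket39, Prod.ext_iff]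
  by_cases hb : p.1 = b <;> simp [hb]

lemma pairing (E : Matrix (Fin 9) (Fin 9) ℂ) (x y : Fin 3 × Fin 9) :
    ∑ p : Fin 3 × Fin 9, (starRingEnd ℂ) (ket39 x.1 x.2 p) * actBC E (ket39 y.1 y.2) p
      = bf E x y := by
  simp only [actBC_ket, ket39, bf]
  rw [Fintype.sum_eq_single x]
  · simp
  · intro p hp; simp [hp]

def sgn (ε : Fin 2) : ℂ := if ε = 0 then 1 else -1

lemma star_sgn (ε : Fin 2) : (starRingEnd ℂ) (sgn ε) = sgn ε := by
  unfold sgn; split <;> simp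

lemma sgn_zero : sgn 0 = 1 := rfl
lemma sgn_one : sgn 1 = -1 := rfl

lemma state_pairing (E : Matrix (Fin 9) (Fin 9) ℂ) (m : Fin 12) (ε : Fin 2)
    (m' : Fin 12) (ε' : Fin 2) :
    ∑ p : Fin 3 × Fin 9, (starRingEnd ℂ) (gridState m ε p) * actBC E (gridState m' ε') p
      = bf E (gridPair m).1 (gridPair m').1 + sgn ε' * bf E (gridPair m).1 (gridPair m').2
        + sgn ε * bf E (gridPair m).2 (gridPair m').1
        + sgn ε * sgn ε' * bf E (gridPair m).2 (gridPair m').2 := by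
  have hact : ∀ p : Fin 3 × Fin 9, actBC E (gridState m' ε') p
      = actBC E (ket39 (gridPair m').1.1 (gridPair m').1.2) p
        + sgn ε' * actBC E (ket39 (gridPair m').2.1 (gridPair m').2.2) p := by
    intro p
    simp only [actBC, gridState, sgn, Pi.add_apply, Pi.smul_apply, smul_eq_mul, mul_add,
      Finset.sum_add_distrib, mul_left_comm, ← Finset.mul_sum]
    split
    · ring
    · simp only [neg_one_mul, mul_neg, Finset.sum_neg_distrib]
  have key : ∀ p : Fin 3 × Fin 9,
      (starRingEnd ℂ) (gridState m ε p) * actBC E (gridState m' ε') p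
      = (starRingEnd ℂ) (ket39 (gridPair m).1.1 (gridPair m).1.2 p)
          * actBC E (ket39 (gridPair m').1.1 (gridPair m').1.2) p
        + sgn ε' * ((starRingEnd ℂ) (ket39 (gridPair m).1.1 (gridPair m).1.2 p)
          * actBC E (ket39 (gridPair m').2.1 (gridPair m').2.2) p)
        + sgn ε * ((starRingEnd ℂ) (ket39 (gridPair m).2.1 (gridPair m).2.2 p)
          * actBC E (ket39 (gridPair m').1.1 (gridPair m').1.2) p)
        + sgn ε * sgn ε' * ((starRingEnd ℂ) (ket39 (gridPair m).2.1 (gridPair m).2.2 p)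
          * actBC E (ket39 (gridPair m').2.1 (gridPair m').2.2) p) := by
    intro p
    rw [hact]
    have : (starRingEnd ℂ) (gridState m ε p)
        = (starRingEnd ℂ) (ket39 (gridPair m).1.1 (gridPair m).1.2 p)
          + sgn ε * (starRingEnd ℂ) (ket39 (gridPair m).2.1 (gridPair m).2.2 p) := by
      simp only [gridState, Pi.add_apply, Pi.smul_apply, smul_eq_mul, map_add, map_mul]
      rw [show ((if ε = 0 then (1:ℂ) else -1)) = sgn ε from rfl, star_sgn]
    rw [this]; ring
  rw [Finset.sum_congr rfl fun p _ => key p]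
  simp only [Finset.sum_add_distrib, ← Finset.mul_sum, pairing]

lemma gp0 : gridPair 0 = ((1,0),(2,1)) := rfl
lemma gp1 : gridPair 1 = ((1,1),(2,0)) := rfl
lemma gp2 : gridPair 2 = ((1,2),(2,3)) := rfl
lemma gp3 : gridPair 3 = ((1,3),(2,2)) := rfl
lemma gp4 : gridPair 4 = ((2,5),(2,7)) := rfl
lemma gp5 : gridPair 5 = ((2,4),(2,6)) := rfl
lemma gp6 : gridPair 6 = ((0,5),(1,6)) := rfl
lemma gp7 : gridPair 7 = ((0,6),(1,5)) := rfl
lemma gp8 : gridPair 8 = ((0,7),(1,8)) := rfl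
lemma gp9 : gridPair 9 = ((0,8),(1,7)) := rfl
lemma gp10 : gridPair 10 = ((0,1),(0,3)) := rfl
lemma gp11 : gridPair 11 = ((0,2),(0,4)) := rfl

lemma cross (E : Matrix (Fin 9) (Fin 9) ℂ)
    (h : ∀ m ε m' ε', (m, ε) ≠ (m', ε') →
      ∑ p : Fin 3 × Fin 9,
        (starRingEnd ℂ) (gridState m ε p) * actBC E (gridState m' ε') p = 0)
    (m m' : Fin 12) (hmm : m ≠ m') :
    bf E (gridPair m).1 (gridPair m').1 = 0 ∧ bf E (gridPair m).1 (gridPair m').2 = 0 ∧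
      bf E (gridPair m).2 (gridPair m').1 = 0 ∧ bf E (gridPair m).2 (gridPair m').2 = 0 := by
  have e00 := h m 0 m' 0 (by simp [Prod.ext_iff, hmm])
  have e01 := h m 0 m' 1 (by simp [Prod.ext_iff, hmm])
  have e10 := h m 1 m' 0 (by simp [Prod.ext_iff, hmm])
  have e11 := h m 1 m' 1 (by simp [Prod.ext_iff, hmm])
  rw [state_pairing] at e00 e01 e10 e11
  simp only [sgn_zero, sgn_one] at e00 e01 e10 e11
  refine ⟨?_, ?_, ?_, ?_⟩
  · linear_combination (e00 + e01 + e10 + e11) / 4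
  · linear_combination (e00 - e01 + e10 - e11) / 4
  · linear_combination (e00 + e01 - e10 - e11) / 4
  · linear_combination (e00 - e01 - e10 + e11) / 4

lemma diag (E : Matrix (Fin 9) (Fin 9) ℂ)
    (h : ∀ m ε m' ε', (m, ε) ≠ (m', ε') →
      ∑ p : Fin 3 × Fin 9,
        (starRingEnd ℂ) (gridState m ε p) * actBC E (gridState m' ε') p = 0)
    (m : Fin 12) :
    bf E (gridPair m).1 (gridPair m).1 = bf E (gridPair m).2 (gridPair m).2 := by
  have e01 := h m 0 m 1 (by simp)
  have e10 := h m 1 m 0 (by simp)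
  rw [state_pairing] at e01 e10
  simp only [sgn_zero, sgn_one] at e01 e10
  linear_combination (e01 + e10) / 2

theorem grid_second_party_povm_trivial (E : Matrix (Fin 9) (Fin 9) ℂ)
    (hE : E.IsHermitian)
    (h : ∀ m ε m' ε', (m, ε) ≠ (m', ε') →
      ∑ p : Fin 3 × Fin 9,
        (starRingEnd ℂ) (gridState m ε p) * actBC E (gridState m' ε') p = 0) :
    ∃ c : ℂ, E = c • (1 : Matrix (Fin 9) (Fin 9) ℂ) := by
  have z01 : E 0 1 = 0 := by simpa [bf, gp0, gp1] using (cross E h 0 1 (by decide)).1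
  have z02 : E 0 2 = 0 := by simpa [bf, gp0, gp2] using (cross E h 0 2 (by decide)).1
  have z03 : E 0 3 = 0 := by simpa [bf, gp0, gp3] using (cross E h 0 3 (by decide)).1
  have z04 : E 0 4 = 0 := by simpa [bf, gp1, gp5] using (cross E h 1 5 (by decide)).2.2.1
  have z05 : E 0 5 = 0 := by simpa [bf, gp0, gp7] using (cross E h 0 7 (by decide)).2.1
  have z06 : E 0 6 = 0 := by simpa [bf, gp0, gp6] using (cross E h 0 6 (by decide)).2.1
  have z07 : E 0 7 = 0 := by simpa [bf, gp0, gp9] using (cross E h 0 9 (by decide)).2.1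
  have z08 : E 0 8 = 0 := by simpa [bf, gp0, gp8] using (cross E h 0 8 (by decide)).2.1
  have z10 : E 1 0 = 0 := by simpa [bf, gp1, gp0] using (cross E h 1 0 (by decide)).1
  have z12 : E 1 2 = 0 := by simpa [bf, gp1, gp2] using (cross E h 1 2 (by decide)).1
  have z13 : E 1 3 = 0 := by simpa [bf, gp1, gp3] using (cross E h 1 3 (by decide)).1
  have z14 : E 1 4 = 0 := by simpa [bf, gp0, gp5] using (cross E h 0 5 (by decide)).2.2.1
  have z15 : E 1 5 = 0 := by simpa [bf, gp1, gp7] using (cross E h 1 7 (by decide)).2.1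
  have z16 : E 1 6 = 0 := by simpa [bf, gp1, gp6] using (cross E h 1 6 (by decide)).2.1
  have z17 : E 1 7 = 0 := by simpa [bf, gp1, gp9] using (cross E h 1 9 (by decide)).2.1
  have z18 : E 1 8 = 0 := by simpa [bf, gp1, gp8] using (cross E h 1 8 (by decide)).2.1
  have z20 : E 2 0 = 0 := by simpa [bf, gp2, gp0] using (cross E h 2 0 (by decide)).1
  have z21 : E 2 1 = 0 := by simpa [bf, gp2, gp1] using (cross E h 2 1 (by decide)).1
  have z23 : E 2 3 = 0 := by simpa [bf, gp2, gp3] using (cross E h 2 3 (by decide)).1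
  have z24 : E 2 4 = 0 := by simpa [bf, gp3, gp5] using (cross E h 3 5 (by decide)).2.2.1
  have z25 : E 2 5 = 0 := by simpa [bf, gp2, gp7] using (cross E h 2 7 (by decide)).2.1
  have z26 : E 2 6 = 0 := by simpa [bf, gp2, gp6] using (cross E h 2 6 (by decide)).2.1
  have z27 : E 2 7 = 0 := by simpa [bf, gp2, gp9] using (cross E h 2 9 (by decide)).2.1
  have z28 : E 2 8 = 0 := by simpa [bf, gp2, gp8] using (cross E h 2 8 (by decide)).2.1
  have z30 : E 3 0 = 0 := by simpa [bf, gp3, gp0] using (cross E h 3 0 (by decide)).1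
  have z31 : E 3 1 = 0 := by simpa [bf, gp3, gp1] using (cross E h 3 1 (by decide)).1
  have z32 : E 3 2 = 0 := by simpa [bf, gp3, gp2] using (cross E h 3 2 (by decide)).1
  have z34 : E 3 4 = 0 := by simpa [bf, gp2, gp5] using (cross E h 2 5 (by decide)).2.2.1
  have z35 : E 3 5 = 0 := by simpa [bf, gp3, gp7] using (cross E h 3 7 (by decide)).2.1
  have z36 : E 3 6 = 0 := by simpa [bf, gp3, gp6] using (cross E h 3 6 (by decide)).2.1
  have z37 : E 3 7 = 0 := by simpa [bf, gp3, gp9] using (cross E h 3 9 (by decide)).2.1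
  have z38 : E 3 8 = 0 := by simpa [bf, gp3, gp8] using (cross E h 3 8 (by decide)).2.1
  have z40 : E 4 0 = 0 := by simpa [bf, gp5, gp1] using (cross E h 5 1 (by decide)).2.1
  have z41 : E 4 1 = 0 := by simpa [bf, gp5, gp0] using (cross E h 5 0 (by decide)).2.1
  have z42 : E 4 2 = 0 := by simpa [bf, gp5, gp3] using (cross E h 5 3 (by decide)).2.1
  have z43 : E 4 3 = 0 := by simpa [bf, gp5, gp2] using (cross E h 5 2 (by decide)).2.1
  have z45 : E 4 5 = 0 := by simpa [bf, gp5, gp4] using (cross E h 5 4 (by decide)).1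
  have z46 : E 4 6 = 0 := by simpa [bf, gp11, gp7] using (cross E h 11 7 (by decide)).2.2.1
  have z47 : E 4 7 = 0 := by simpa [bf, gp5, gp4] using (cross E h 5 4 (by decide)).2.1
  have z48 : E 4 8 = 0 := by simpa [bf, gp11, gp9] using (cross E h 11 9 (by decide)).2.2.1
  have z50 : E 5 0 = 0 := by simpa [bf, gp7, gp0] using (cross E h 7 0 (by decide)).2.2.1
  have z51 : E 5 1 = 0 := by simpa [bf, gp7, gp1] using (cross E h 7 1 (by decide)).2.2.1
  have z52 : E 5 2 = 0 := by simpa [bf, gp7, gp2] using (cross E h 7 2 (by decide)).2.2.1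
  have z53 : E 5 3 = 0 := by simpa [bf, gp7, gp3] using (cross E h 7 3 (by decide)).2.2.1
  have z54 : E 5 4 = 0 := by simpa [bf, gp4, gp5] using (cross E h 4 5 (by decide)).1
  have z56 : E 5 6 = 0 := by simpa [bf, gp7, gp6] using (cross E h 7 6 (by decide)).2.2.2
  have z57 : E 5 7 = 0 := by simpa [bf, gp7, gp9] using (cross E h 7 9 (by decide)).2.2.2
  have z58 : E 5 8 = 0 := by simpa [bf, gp7, gp8] using (cross E h 7 8 (by decide)).2.2.2
  have z60 : E 6 0 = 0 := by simpa [bf, gp6, gp0] using (cross E h 6 0 (by decide)).2.2.1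
  have z61 : E 6 1 = 0 := by simpa [bf, gp6, gp1] using (cross E h 6 1 (by decide)).2.2.1
  have z62 : E 6 2 = 0 := by simpa [bf, gp6, gp2] using (cross E h 6 2 (by decide)).2.2.1
  have z63 : E 6 3 = 0 := by simpa [bf, gp6, gp3] using (cross E h 6 3 (by decide)).2.2.1
  have z64 : E 6 4 = 0 := by simpa [bf, gp7, gp11] using (cross E h 7 11 (by decide)).2.1
  have z65 : E 6 5 = 0 := by simpa [bf, gp6, gp7] using (cross E h 6 7 (by decide)).2.2.2
  have z67 : E 6 7 = 0 := by simpa [bf, gp6, gp9] using (cross E h 6 9 (by decide)).2.2.2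
  have z68 : E 6 8 = 0 := by simpa [bf, gp6, gp8] using (cross E h 6 8 (by decide)).2.2.2
  have z70 : E 7 0 = 0 := by simpa [bf, gp9, gp0] using (cross E h 9 0 (by decide)).2.2.1
  have z71 : E 7 1 = 0 := by simpa [bf, gp9, gp1] using (cross E h 9 1 (by decide)).2.2.1
  have z72 : E 7 2 = 0 := by simpa [bf, gp9, gp2] using (cross E h 9 2 (by decide)).2.2.1
  have z73 : E 7 3 = 0 := by simpa [bf, gp9, gp3] using (cross E h 9 3 (by decide)).2.2.1
  have z74 : E 7 4 = 0 := by simpa [bf, gp4, gp5] using (cross E h 4 5 (by decide)).2.2.1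
  have z75 : E 7 5 = 0 := by simpa [bf, gp9, gp7] using (cross E h 9 7 (by decide)).2.2.2
  have z76 : E 7 6 = 0 := by simpa [bf, gp9, gp6] using (cross E h 9 6 (by decide)).2.2.2
  have z78 : E 7 8 = 0 := by simpa [bf, gp9, gp8] using (cross E h 9 8 (by decide)).2.2.2
  have z80 : E 8 0 = 0 := by simpa [bf, gp8, gp0] using (cross E h 8 0 (by decide)).2.2.1
  have z81 : E 8 1 = 0 := by simpa [bf, gp8, gp1] using (cross E h 8 1 (by decide)).2.2.1
  have z82 : E 8 2 = 0 := by simpa [bf, gp8, gp2] using (cross E h 8 2 (by decide)).2.2.1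
  have z83 : E 8 3 = 0 := by simpa [bf, gp8, gp3] using (cross E h 8 3 (by decide)).2.2.1
  have z84 : E 8 4 = 0 := by simpa [bf, gp9, gp11] using (cross E h 9 11 (by decide)).2.1
  have z85 : E 8 5 = 0 := by simpa [bf, gp8, gp7] using (cross E h 8 7 (by decide)).2.2.2
  have z86 : E 8 6 = 0 := by simpa [bf, gp8, gp6] using (cross E h 8 6 (by decide)).2.2.2
  have z87 : E 8 7 = 0 := by simpa [bf, gp8, gp9] using (cross E h 8 9 (by decide)).2.2.2
  have d0 : E 0 0 = E 1 1 := by simpa [bf, gp0] using diag E h 0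
  have d10 : E 1 1 = E 3 3 := by simpa [bf, gp10] using diag E h 10
  have d2 : E 2 2 = E 3 3 := by simpa [bf, gp2] using diag E h 2
  have d11 : E 2 2 = E 4 4 := by simpa [bf, gp11] using diag E h 11
  have d5 : E 4 4 = E 6 6 := by simpa [bf, gp5] using diag E h 5
  have d7 : E 6 6 = E 5 5 := by simpa [bf, gp7] using diag E h 7
  have d4 : E 5 5 = E 7 7 := by simpa [bf, gp4] using diag E h 4
  have d8 : E 7 7 = E 8 8 := by simpa [bf, gp8] using diag E h 8
  have dd1 : E 1 1 = E 0 0 := by linear_combination -d0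
  have dd2 : E 2 2 = E 0 0 := by linear_combination d2 - d10 - d0
  have dd3 : E 3 3 = E 0 0 := by linear_combination -d0 - d10
  have dd4 : E 4 4 = E 0 0 := by linear_combination -d11 + d2 - d10 - d0
  have dd5 : E 5 5 = E 0 0 := by linear_combination -d7 - d5 - d11 + d2 - d10 - d0
  have dd6 : E 6 6 = E 0 0 := by linear_combination -d5 - d11 + d2 - d10 - d0
  have dd7 : E 7 7 = E 0 0 := by linear_combination -d4 - d7 - d5 - d11 + d2 - d10 - d0
  have dd8 : E 8 8 = E 0 0 := by linear_combination -d8 - d4 - d7 - d5 - d11 + d2 - d10 - d0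
  refine ⟨E 0 0, ?_⟩
  ext i j
  rw [Matrix.smul_apply, Matrix.one_apply]
  fin_cases i <;> fin_cases j <;> simp <;> first | rfl | assumption
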